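/- Nonnegativity of the Bakry–Émery Ricci tensor: if u solves the weighted Monge–Ampère equation and φ := (1/2)(u_{,p} ξ^p + v_q x^q), then for every x ∈ N the matrix ((Ric_φ)_{ij}(x)) is positive semidefinite, i.e. (Ric_φ)_{ij}(x) w^i w^j ≥ 0 for every w ∈ ℝ^n. -/

import Mathlib

open scoped BigOperators
noncomputable section

namespace KRS

variable {n : ℕ}

/-- Partial derivative of `f` in the `i`-th coordinate direction. -/
def pd (i : Fin n) (f : (Fin n → ℝ) → ℝ) : (Fin n → ℝ) → ℝ :=
  fun x => fderiv ℝ f x (Pi.single i 1)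

/-- The Hessian matrix `g(x)` of `u`, with entries `g_{ij} = ∂²u/∂x^i∂x^j`. -/
def hessian (u : (Fin n → ℝ) → ℝ) (x : Fin n → ℝ) : Matrix (Fin n) (Fin n) ℝ :=
  Matrix.of fun i j => pd i (pd j u) x

/-- The inverse matrix `g(x)⁻¹`, with entries `g^{ij}`. -/
def ginv (u : (Fin n → ℝ) → ℝ) (x : Fin n → ℝ) : Matrix (Fin n) (Fin n) ℝ :=
  (hessian u x)⁻¹

/-- Third iterated partial derivative `u_{,ijk}`. -/
def d3 (u : (Fin n → ℝ) → ℝ) (i j k : Fin n) : (Fin n → ℝ) → ℝ :=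
  pd i (pd j (pd k u))

/-- Fourth iterated partial derivative `u_{,ijkl}`. -/
def d4 (u : (Fin n → ℝ) → ℝ) (i j k l : Fin n) : (Fin n → ℝ) → ℝ :=
  pd i (pd j (pd k (pd l u)))

/-- Christoffel symbols `Γ^k_{ij} = (1/2) g^{kl}(∂_i g_{jl} + ∂_j g_{il} − ∂_l g_{ij})`. -/
def Christoffel (u : (Fin n → ℝ) → ℝ) (k i j : Fin n) : (Fin n → ℝ) → ℝ :=
  fun x => (1/2) * ∑ l, ginv u x k l * (d3 u i j l x + d3 u j i l x - d3 u l i j x)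

/-- Riemann curvature tensor
`Rm_{ijkl} = g_{is}(∂_k Γ^s_{lj} − ∂_l Γ^s_{kj} + Γ^s_{kp} Γ^p_{lj} − Γ^s_{lp} Γ^p_{kj})`. -/
def Rm (u : (Fin n → ℝ) → ℝ) (i j k l : Fin n) : (Fin n → ℝ) → ℝ :=
  fun x => ∑ s, hessian u x i s *
    (pd k (Christoffel u s l j) x - pd l (Christoffel u s k j) x
      + ∑ p, Christoffel u s k p x * Christoffel u p l j x
      - ∑ p, Christoffel u s l p x * Christoffel u p k j x)

/-- Ricci tensor `Ric_{ij} = ∂_k Γ^k_{ij} − ∂_j Γ^k_{ik} + Γ^k_{kp} Γ^p_{ij} − Γ^k_{jp} Γ^p_{ik}`. -/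
def Ricci (u : (Fin n → ℝ) → ℝ) (i j : Fin n) : (Fin n → ℝ) → ℝ :=
  fun x => (∑ k, pd k (Christoffel u k i j) x) - (∑ k, pd j (Christoffel u k i k) x)
    + (∑ k, ∑ p, Christoffel u k k p x * Christoffel u p i j x)
    - (∑ k, ∑ p, Christoffel u k j p x * Christoffel u p i k x)

/-- Scalar curvature `s = g^{ij} Ric_{ij}`. -/
def scalarCurv (u : (Fin n → ℝ) → ℝ) : (Fin n → ℝ) → ℝ :=
  fun x => ∑ i, ∑ j, ginv u x i j * Ricci u i j x

/-- Covariant Hessian `(∇²φ)_{ij} = φ_{,ij} − Γ^k_{ij} φ_{,k}`. -/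
def covHess (u φ : (Fin n → ℝ) → ℝ) (i j : Fin n) : (Fin n → ℝ) → ℝ :=
  fun x => pd i (pd j φ) x - ∑ k, Christoffel u k i j x * pd k φ x

/-- Laplace–Beltrami operator `Δφ = g^{ij} (∇²φ)_{ij}`. -/
def laplacian (u φ : (Fin n → ℝ) → ℝ) : (Fin n → ℝ) → ℝ :=
  fun x => ∑ i, ∑ j, ginv u x i j * covHess u φ i j x

/-- Weighted (drift) Laplacian `Δ_φ F = ΔF − g^{ij} φ_{,i} F_{,j}`. -/
def driftLap (u φ F : (Fin n → ℝ) → ℝ) : (Fin n → ℝ) → ℝ :=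
  fun x => laplacian u F x - ∑ i, ∑ j, ginv u x i j * pd i φ x * pd j F x

/-- Bakry–Émery Ricci tensor `(Ric_φ)_{ij} = Ric_{ij} + (∇²φ)_{ij}`. -/
def ricciPhi (u φ : (Fin n → ℝ) → ℝ) (i j : Fin n) : (Fin n → ℝ) → ℝ :=
  fun x => Ricci u i j x + covHess u φ i j x

/-- Pointwise squared `g`-norm of the third derivative tensor:
`|u_{,ijk}|²_g = g^{ip} g^{jq} g^{kr} u_{,ijk} u_{,pqr}`. -/
def norm3 (u : (Fin n → ℝ) → ℝ) : (Fin n → ℝ) → ℝ :=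
  fun x => ∑ i, ∑ j, ∑ k, ∑ p, ∑ q, ∑ r,
    ginv u x i p * ginv u x j q * ginv u x k r * d3 u i j k x * d3 u p q r x

/-- The canonical weight function `φ = (1/2)(u_{,p} ξ^p + v_q x^q)`. -/
def weight (u : (Fin n → ℝ) → ℝ) (ξ v : Fin n → ℝ) : (Fin n → ℝ) → ℝ :=
  fun x => (1/2) * ((∑ p, pd p u x * ξ p) + ∑ q, v q * x q)

/-- `u` solves the weighted Monge–Ampère equation
`log det g(x) = −v_p x^p + u_{,q}(x) ξ^q + c` on `N`. -/
def MAeq (u : (Fin n → ℝ) → ℝ) (N : Set (Fin n → ℝ)) (v ξ : Fin n → ℝ) (c : ℝ) : Prop :=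
  ∀ x ∈ N, Real.log (hessian u x).det = -(∑ p, v p * x p) + (∑ q, pd q u x * ξ q) + c

/-- Covariant derivative of the third derivative tensor:
`(∇T)_{lijk} = u_{,ijkl} − Γ^s_{li} u_{,sjk} − Γ^s_{lj} u_{,isk} − Γ^s_{lk} u_{,ijs}`. -/
def covT (u : (Fin n → ℝ) → ℝ) (l i j k : Fin n) : (Fin n → ℝ) → ℝ :=
  fun x => d4 u i j k l x - (∑ s, Christoffel u s l i x * d3 u s j k x)
    - (∑ s, Christoffel u s l j x * d3 u i s k x)
    - (∑ s, Christoffel u s l k x * d3 u i j s x)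

/-- Completeness of the Hessian metric `g = D²u` on `N`: every C¹ curve
`γ : [0,1) → N` that eventually leaves every compact subset of `N`
has infinite `g`-length. -/
def HessComplete (u : (Fin n → ℝ) → ℝ) (N : Set (Fin n → ℝ)) : Prop :=
  ∀ γ : ℝ → (Fin n → ℝ),
    ContDiffOn ℝ 1 γ (Set.Ico (0:ℝ) 1) →
    (∀ t ∈ Set.Ico (0:ℝ) 1, γ t ∈ N) →
    (∀ K : Set (Fin n → ℝ), IsCompact K → K ⊆ N →
      ∃ tK ∈ Set.Ico (0:ℝ) 1, ∀ t ∈ Set.Ioo tK 1, γ t ∉ K) →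
    ∫⁻ t in Set.Ioo (0:ℝ) 1,
      ENNReal.ofReal (Real.sqrt (∑ i, ∑ j,
        hessian u (γ t) i j * deriv γ t i * deriv γ t j)) = ⊤



/-! ### Auxiliary lemmas for the proof of `bakry_emery_nonneg` -/

open scoped ContDiff
open Filter Topology

section PDCalc
variable {n : ℕ} {f g : (Fin n → ℝ) → ℝ} {x : Fin n → ℝ} {i j k : Fin n}

lemma pd_congr_nhds (h : f =ᶠ[𝓝 x] g) : pd i f x = pd i g x := by
  unfold pd; rw [h.fderiv_eq]

lemma pd_add (hf : DifferentiableAt ℝ f x) (hg : DifferentiableAt ℝ g x) :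
    pd i (fun y => f y + g y) x = pd i f x + pd i g x := by
  unfold pd; rw [fderiv_fun_add hf hg]; simp

lemma pd_const (c : ℝ) : pd i (fun _ => c) x = 0 := by
  unfold pd; rw [fderiv_fun_const]; simp

lemma pd_neg : pd i (fun y => -f y) x = -pd i f x := by
  unfold pd; rw [fderiv_fun_neg]; simp

lemma pd_mul (hf : DifferentiableAt ℝ f x) (hg : DifferentiableAt ℝ g x) :
    pd i (fun y => f y * g y) x = f x * pd i g x + g x * pd i f x := by
  unfold pd; rw [fderiv_fun_mul hf hg]; simp

lemma pd_const_mul (c : ℝ) (hf : DifferentiableAt ℝ f x) :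
    pd i (fun y => c * f y) x = c * pd i f x := by
  unfold pd; rw [fderiv_const_mul hf]; simp

lemma pd_mul_const (c : ℝ) (hf : DifferentiableAt ℝ f x) :
    pd i (fun y => f y * c) x = pd i f x * c := by
  unfold pd; rw [fderiv_mul_const hf]; simp [mul_comm]

lemma pd_sum {ι : Type*} (s : Finset ι) (F : ι → (Fin n → ℝ) → ℝ)
    (h : ∀ a ∈ s, DifferentiableAt ℝ (F a) x) :
    pd i (fun y => ∑ a ∈ s, F a y) x = ∑ a ∈ s, pd i (F a) x := by
  unfold pd; rw [fderiv_fun_sum h]; simp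

lemma diffAt_coord (q : Fin n) : DifferentiableAt ℝ (fun y : Fin n → ℝ => y q) x :=
  (ContinuousLinearMap.proj q : (Fin n → ℝ) →L[ℝ] ℝ).differentiableAt

lemma pd_coord (q : Fin n) : pd i (fun y => y q) x = if q = i then 1 else 0 := by
  unfold pd
  have : (fun y : Fin n → ℝ => y q) = (ContinuousLinearMap.proj q : (Fin n → ℝ) →L[ℝ] ℝ) := rfl
  rw [this, ContinuousLinearMap.fderiv]
  simp [Pi.single_apply]

lemma pd_prod {ι : Type*} [DecidableEq ι] (s : Finset ι) (F : ι → (Fin n → ℝ) → ℝ)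
    (h : ∀ a ∈ s, DifferentiableAt ℝ (F a) x) :
    pd i (fun y => ∏ a ∈ s, F a y) x
      = ∑ a ∈ s, (∏ b ∈ s.erase a, F b x) * pd i (F a) x := by
  unfold pd
  rw [(HasFDerivAt.finset_prod (fun a ha => ((h a ha).hasFDerivAt))).fderiv]
  simp [Finset.mul_sum]

lemma diffAt_prod {ι : Type*} [DecidableEq ι] (s : Finset ι) (F : ι → (Fin n → ℝ) → ℝ)
    (h : ∀ a ∈ s, DifferentiableAt ℝ (F a) x) :
    DifferentiableAt ℝ (fun y => ∏ a ∈ s, F a y) x :=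
  (HasFDerivAt.finset_prod (fun a ha => (h a ha).hasFDerivAt)).differentiableAt

lemma contDiffAt_pd (hf : ContDiffAt ℝ ∞ f x) : ContDiffAt ℝ ∞ (pd i f) x := by
  have h1 : ContDiffAt ℝ ∞ (fderiv ℝ f) x := hf.fderiv_right (m := ∞) (by simp)
  exact h1.clm_apply contDiffAt_const

lemma cdiffAt_diffAt (hf : ContDiffAt ℝ ∞ f x) : DifferentiableAt ℝ f x :=
  hf.differentiableAt (by simp)

lemma pd_eq_snd_fderiv (hf : ContDiffAt ℝ ∞ f x) :
    pd i (pd j f) x = fderiv ℝ (fderiv ℝ f) x (Pi.single i 1) (Pi.single j 1) := by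
  have hc : DifferentiableAt ℝ (fderiv ℝ f) x :=
    (hf.fderiv_right (m := ∞) (by simp)).differentiableAt (by simp)
  have : pd i (pd j f) x
      = fderiv ℝ (fun y => (fderiv ℝ f y) ((fun _ : Fin n → ℝ => (Pi.single j 1 : Fin n → ℝ)) y)) x
          (Pi.single i 1) := rfl
  rw [this, fderiv_clm_apply hc (differentiableAt_const _)]
  simp

lemma pd_comm (hf : ContDiffAt ℝ ∞ f x) : pd i (pd j f) x = pd j (pd i f) x := by
  rw [pd_eq_snd_fderiv hf, pd_eq_snd_fderiv hf]
  exact hf.isSymmSndFDerivAt (by rw [minSmoothness_of_isRCLikeNormedField]; exact WithTop.coe_le_coe.mpr le_top) _ _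

end PDCalc

section Det
variable {n : ℕ} {x : Fin n → ℝ} {k : Fin n} {M : (Fin n → ℝ) → Matrix (Fin n) (Fin n) ℝ}

lemma det_fun_eq : (fun y => (M y).det)
    = fun y => ∑ σ : Equiv.Perm (Fin n), ((Equiv.Perm.sign σ : ℤ) : ℝ) * ∏ a, M y (σ a) a := by
  funext y; rw [Matrix.det_apply']

lemma diffAt_det (h : ∀ a b, DifferentiableAt ℝ (fun y => M y a b) x) :
    DifferentiableAt ℝ (fun y => (M y).det) x := by
  rw [det_fun_eq]
  exact DifferentiableAt.fun_sum fun σ _ =>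
    (diffAt_prod Finset.univ (fun a y => M y (σ a) a) (fun a _ => h (σ a) a)).const_mul _

lemma diffAt_adj (h : ∀ a b, DifferentiableAt ℝ (fun y => M y a b) x) (a b : Fin n) :
    DifferentiableAt ℝ (fun y => (M y).adjugate a b) x := by
  have : (fun y => (M y).adjugate a b) = fun y => ((M y).updateRow b (Pi.single a 1)).det := by
    funext y; rw [Matrix.adjugate_apply]
  rw [this]
  apply diffAt_det
  intro c d
  simp only [Matrix.updateRow_apply]
  by_cases hc : c = b
  · simp [hc]
  · simpa [hc] using h c d

lemma pd_det (h : ∀ a b, DifferentiableAt ℝ (fun y => M y a b) x) :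
    pd k (fun y => (M y).det) x
      = ∑ c, ((M x).updateCol c (fun r => pd k (fun y => M y r c) x)).det := by
  rw [det_fun_eq, pd_sum _ _ (fun σ _ =>
    (diffAt_prod Finset.univ (fun a y => M y (σ a) a) (fun a _ => h (σ a) a)).const_mul _)]
  have hterm : ∀ σ : Equiv.Perm (Fin n),
      pd k (fun y => ((Equiv.Perm.sign σ : ℤ) : ℝ) * ∏ a, M y (σ a) a) x
        = ((Equiv.Perm.sign σ : ℤ) : ℝ) * ∑ a, (∏ b ∈ Finset.univ.erase a, M x (σ b) b)
            * pd k (fun y => M y (σ a) a) x := fun σ => by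
    rw [pd_const_mul _ (diffAt_prod Finset.univ (fun a y => M y (σ a) a) (fun a _ => h (σ a) a)),
        pd_prod Finset.univ (fun a y => M y (σ a) a) (fun a _ => h (σ a) a)]
  rw [Finset.sum_congr rfl (fun σ _ => hterm σ)]
  have hRHS : ∀ c : Fin n,
      ((M x).updateCol c (fun r => pd k (fun y => M y r c) x)).det
        = ∑ σ : Equiv.Perm (Fin n), ((Equiv.Perm.sign σ : ℤ) : ℝ)
            * (pd k (fun y => M y (σ c) c) x * ∏ b ∈ Finset.univ.erase c, M x (σ b) b) := by
    intro c
    rw [Matrix.det_apply']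
    refine Finset.sum_congr rfl fun σ _ => ?_
    congr 1
    have : ∀ a : Fin n, ((M x).updateCol c (fun r => pd k (fun y => M y r c) x)) (σ a) a
        = Function.update (fun a => M x (σ a) a) c (pd k (fun y => M y (σ c) c) x) a := by
      intro a
      by_cases hac : a = c
      · subst hac; simp [Matrix.updateCol_apply]
      · simp [Matrix.updateCol_apply, Function.update, hac]
    rw [Finset.prod_congr rfl (fun a _ => this a),
        Finset.prod_update_of_mem (Finset.mem_univ c), ← Finset.erase_eq]
  rw [Finset.sum_congr rfl (fun c _ => hRHS c), Finset.sum_comm]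
  refine Finset.sum_congr rfl fun σ _ => ?_
  rw [Finset.mul_sum]
  exact Finset.sum_congr rfl fun a _ => by ring

lemma pd_det_adj (h : ∀ a b, DifferentiableAt ℝ (fun y => M y a b) x) :
    pd k (fun y => (M y).det) x
      = ∑ c, ∑ r, (M x).adjugate c r * pd k (fun y => M y r c) x := by
  rw [pd_det h]
  refine Finset.sum_congr rfl fun c _ => ?_
  rw [← Matrix.cramer_apply, Matrix.cramer_eq_adjugate_mulVec]
  simp [Matrix.mulVec, dotProduct]

end Det

section HessAnalysis
open scoped Matrix
variable {n : ℕ} {N : Set (Fin n → ℝ)} {u : (Fin n → ℝ) → ℝ} {x : Fin n → ℝ}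
  {i j k l a b : Fin n}

lemma hess_apply : hessian u x i j = pd i (pd j u) x := rfl

lemma hess_fun : (fun y => hessian u y i j) = pd i (pd j u) := rfl

lemma hess_symm (hu : ∀ y ∈ N, ContDiffAt ℝ ∞ u y) (hx : x ∈ N) :
    hessian u x i j = hessian u x j i := pd_comm (hu x hx)

lemma d3_swap12 (hu : ∀ y ∈ N, ContDiffAt ℝ ∞ u y) (hx : x ∈ N) :
    d3 u i j k x = d3 u j i k x := pd_comm (contDiffAt_pd (hu x hx))

lemma d3_swap23 (hN : IsOpen N) (hu : ∀ y ∈ N, ContDiffAt ℝ ∞ u y) (hx : x ∈ N) :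
    d3 u i j k x = d3 u i k j x := by
  apply pd_congr_nhds
  filter_upwards [hN.mem_nhds hx] with y hy
  exact pd_comm (hu y hy)

lemma d3_cycle (hN : IsOpen N) (hu : ∀ y ∈ N, ContDiffAt ℝ ∞ u y) (hx : x ∈ N) :
    d3 u k i j x = d3 u i j k x := by
  rw [d3_swap12 hu hx, d3_swap23 hN hu hx]

lemma d4_swap12 (hu : ∀ y ∈ N, ContDiffAt ℝ ∞ u y) (hx : x ∈ N) :
    d4 u i j k l x = d4 u j i k l x :=
  pd_comm (contDiffAt_pd (contDiffAt_pd (hu x hx)))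

lemma d4_swap23 (hN : IsOpen N) (hu : ∀ y ∈ N, ContDiffAt ℝ ∞ u y) (hx : x ∈ N) :
    d4 u i j k l x = d4 u i k j l x := by
  apply pd_congr_nhds
  filter_upwards [hN.mem_nhds hx] with y hy
  exact pd_comm (contDiffAt_pd (hu y hy))

lemma d4_13 (hN : IsOpen N) (hu : ∀ y ∈ N, ContDiffAt ℝ ∞ u y) (hx : x ∈ N) :
    d4 u k i j l x = d4 u j i k l x := by
  rw [d4_swap12 hu hx, d4_swap23 hN hu hx, d4_swap12 hu hx]

lemma ginv_entry : ginv u x i j = ((hessian u x).det)⁻¹ * (hessian u x).adjugate i j := by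
  show (hessian u x)⁻¹ i j = _
  rw [Matrix.inv_def]
  simp [Ring.inverse_eq_inv']

lemma diffAt_hess (hu : ∀ y ∈ N, ContDiffAt ℝ ∞ u y) (hx : x ∈ N) :
    DifferentiableAt ℝ (fun y => hessian u y a b) x :=
  cdiffAt_diffAt (contDiffAt_pd (contDiffAt_pd (hu x hx)))

lemma diffAt_d3 (hu : ∀ y ∈ N, ContDiffAt ℝ ∞ u y) (hx : x ∈ N) :
    DifferentiableAt ℝ (d3 u i j k) x :=
  cdiffAt_diffAt (contDiffAt_pd (contDiffAt_pd (contDiffAt_pd (hu x hx))))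

lemma diffAt_ginv (hu : ∀ y ∈ N, ContDiffAt ℝ ∞ u y)
    (hdet : ∀ y ∈ N, (hessian u y).det ≠ 0) (hx : x ∈ N) :
    DifferentiableAt ℝ (fun y => ginv u y a b) x := by
  have he : (fun y => ginv u y a b)
      = fun y => ((hessian u y).det)⁻¹ * (hessian u y).adjugate a b :=
    funext fun y => ginv_entry
  rw [he]
  exact ((diffAt_det (fun c d => diffAt_hess hu hx)).inv (hdet x hx)).mul
    (diffAt_adj (fun c d => diffAt_hess hu hx) a b)

lemma sum_ginv_hess (hdet : ∀ y ∈ N, (hessian u y).det ≠ 0) (hx : x ∈ N) :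
    ∑ l, ginv u x i l * hessian u x l j = if i = j then 1 else 0 := by
  have h := Matrix.nonsing_inv_mul (hessian u x) (Ne.isUnit (hdet x hx))
  have h2 := congrFun (congrFun h i) j
  rw [Matrix.mul_apply, Matrix.one_apply] at h2
  exact h2

lemma sum_hess_ginv (hdet : ∀ y ∈ N, (hessian u y).det ≠ 0) (hx : x ∈ N) :
    ∑ l, hessian u x i l * ginv u x l j = if i = j then 1 else 0 := by
  have h := Matrix.mul_nonsing_inv (hessian u x) (Ne.isUnit (hdet x hx))
  have h2 := congrFun (congrFun h i) j
  rw [Matrix.mul_apply, Matrix.one_apply] at h2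
  exact h2

lemma ginv_symm (hu : ∀ y ∈ N, ContDiffAt ℝ ∞ u y) (hx : x ∈ N) :
    ginv u x i j = ginv u x j i := by
  have hsym : (hessian u x)ᵀ = hessian u x := by
    ext a b
    exact pd_comm (hu x hx)
  have h2 : (ginv u x)ᵀ = ginv u x := by
    show ((hessian u x)⁻¹)ᵀ = (hessian u x)⁻¹
    rw [Matrix.transpose_nonsing_inv, hsym]
  have h3 := congrFun (congrFun h2 i) j
  rw [Matrix.transpose_apply] at h3
  exact h3.symm

lemma pd_ginv (hN : IsOpen N) (hu : ∀ y ∈ N, ContDiffAt ℝ ∞ u y)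
    (hdet : ∀ y ∈ N, (hessian u y).det ≠ 0) (hx : x ∈ N) :
    pd k (fun y => ginv u y a b) x
      = -∑ c, ∑ d, ginv u x a c * d3 u k c d x * ginv u x d b := by
  have key : ∀ m : Fin n,
      ∑ l, hessian u x l m * pd k (fun y => ginv u y a l) x
        = -∑ l, ginv u x a l * d3 u k l m x := by
    intro m
    have hconst : pd k (fun y => ∑ l, ginv u y a l * hessian u y l m) x = 0 := by
      have hev : (fun y => ∑ l, ginv u y a l * hessian u y l m)
          =ᶠ[𝓝 x] (fun _ => if a = m then (1:ℝ) else 0) := by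
        filter_upwards [hN.mem_nhds hx] with y hy
        exact sum_ginv_hess hdet hy
      rw [pd_congr_nhds hev, pd_const]
    have hexp : pd k (fun y => ∑ l, ginv u y a l * hessian u y l m) x
        = ∑ l, (ginv u x a l * d3 u k l m x
            + hessian u x l m * pd k (fun y => ginv u y a l) x) := by
      rw [pd_sum Finset.univ (fun l y => ginv u y a l * hessian u y l m)
        (fun l _ => (diffAt_ginv hu hdet hx).mul (diffAt_hess hu hx))]
      exact Finset.sum_congr rfl fun l _ =>
        pd_mul (diffAt_ginv hu hdet hx) (diffAt_hess hu hx)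
    rw [hconst] at hexp
    have := hexp.symm
    rw [Finset.sum_add_distrib] at this
    linarith [this]
  have contract : pd k (fun y => ginv u y a b) x
      = ∑ m, (∑ l, hessian u x l m * pd k (fun y => ginv u y a l) x) * ginv u x m b := by
    rw [Finset.sum_congr rfl (fun m _ => Finset.sum_mul _ _ _), Finset.sum_comm]
    have : ∀ l, ∑ m, hessian u x l m * pd k (fun y => ginv u y a l) x * ginv u x m b
        = pd k (fun y => ginv u y a l) x * (if l = b then 1 else 0) := by
      intro l
      rw [← sum_hess_ginv hdet hx (i := l) (j := b), Finset.mul_sum]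
      exact Finset.sum_congr rfl fun m _ => by ring
    rw [Finset.sum_congr rfl (fun l _ => this l)]
    simp
  rw [contract, Finset.sum_congr rfl
    (fun m _ => by rw [key m, neg_mul, Finset.sum_mul])]
  rw [Finset.sum_neg_distrib, Finset.sum_comm]

end HessAnalysis

section Gamma
variable {n : ℕ} {N : Set (Fin n → ℝ)} {u : (Fin n → ℝ) → ℝ} {x : Fin n → ℝ}
  {v ξ : Fin n → ℝ} {c : ℝ} {i j k l p : Fin n}

lemma christoffel_at (hN : IsOpen N) (hu : ∀ y ∈ N, ContDiffAt ℝ ∞ u y) (hx : x ∈ N) :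
    Christoffel u k i j x = (1/2) * ∑ l, ginv u x k l * d3 u i j l x := by
  show (1/2) * ∑ l, ginv u x k l * (d3 u i j l x + d3 u j i l x - d3 u l i j x) = _
  congr 1
  refine Finset.sum_congr rfl fun l _ => ?_
  have h1 : d3 u j i l x = d3 u i j l x := d3_swap12 hu hx
  have h2 : d3 u l i j x = d3 u i j l x := d3_cycle hN hu hx
  rw [h1, h2]
  ring

lemma diffAt_sum_ginv_d3 (hN : IsOpen N) (hu : ∀ y ∈ N, ContDiffAt ℝ ∞ u y)
    (hdet : ∀ y ∈ N, (hessian u y).det ≠ 0) (hx : x ∈ N) :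
    DifferentiableAt ℝ (fun y => ∑ l, ginv u y k l * d3 u i j l y) x :=
  DifferentiableAt.fun_sum fun l _ => (diffAt_ginv hu hdet hx).mul (diffAt_d3 hu hx)

lemma pd_christoffel (hN : IsOpen N) (hu : ∀ y ∈ N, ContDiffAt ℝ ∞ u y)
    (hdet : ∀ y ∈ N, (hessian u y).det ≠ 0) (hx : x ∈ N) :
    pd p (Christoffel u k i j) x
      = (1/2) * ∑ l, (ginv u x k l * d4 u p i j l x
          + d3 u i j l x * (-∑ a, ∑ b, ginv u x k a * d3 u p a b x * ginv u x b l)) := by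
  have hev : Christoffel u k i j =ᶠ[𝓝 x]
      fun y => (1/2) * ∑ l, ginv u y k l * d3 u i j l y := by
    filter_upwards [hN.mem_nhds hx] with y hy
    exact christoffel_at hN hu hy
  rw [pd_congr_nhds hev, pd_const_mul _ (diffAt_sum_ginv_d3 hN hu hdet hx),
      pd_sum Finset.univ (fun l y => ginv u y k l * d3 u i j l y)
        (fun l _ => (diffAt_ginv hu hdet hx).mul (diffAt_d3 hu hx))]
  congr 1
  refine Finset.sum_congr rfl fun l _ => ?_
  rw [pd_mul (diffAt_ginv hu hdet hx) (diffAt_d3 hu hx)]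
  rw [pd_ginv hN hu hdet hx]
  rfl

lemma diffAt_weight_core (hu : ∀ y ∈ N, ContDiffAt ℝ ∞ u y) (hx : x ∈ N) :
    DifferentiableAt ℝ (fun y => (∑ p, pd p u y * ξ p) + ∑ q, v q * y q) x := by
  refine DifferentiableAt.add ?_ ?_
  · exact DifferentiableAt.fun_sum fun p _ =>
      (cdiffAt_diffAt (contDiffAt_pd (hu x hx))).mul_const _
  · exact DifferentiableAt.fun_sum fun q _ => (diffAt_coord q).const_mul _

lemma pd_weight (hu : ∀ y ∈ N, ContDiffAt ℝ ∞ u y) (hx : x ∈ N) :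
    pd k (weight u ξ v) x = (1/2) * ((∑ p, hessian u x k p * ξ p) + v k) := by
  have : weight u ξ v
      = fun y => (1/2) * ((∑ p, pd p u y * ξ p) + ∑ q, v q * y q) := rfl
  rw [this, pd_const_mul _ (diffAt_weight_core hu hx),
      pd_add (DifferentiableAt.fun_sum fun p _ =>
          (cdiffAt_diffAt (contDiffAt_pd (hu x hx))).mul_const _)
        (DifferentiableAt.fun_sum fun q _ => (diffAt_coord q).const_mul _),
      pd_sum Finset.univ (fun p y => pd p u y * ξ p)
        (fun p _ => (cdiffAt_diffAt (contDiffAt_pd (hu x hx))).mul_const _),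
      pd_sum Finset.univ (fun q y => v q * y q)
        (fun q _ => (diffAt_coord q).const_mul _)]
  congr 2
  · exact Finset.sum_congr rfl fun p _ =>
      pd_mul_const _ (cdiffAt_diffAt (contDiffAt_pd (hu x hx)))
  · rw [Finset.sum_congr rfl fun q (_ : q ∈ Finset.univ) => by
      rw [pd_const_mul (v q) (diffAt_coord q), pd_coord]]
    simp

lemma pd2_weight (hN : IsOpen N) (hu : ∀ y ∈ N, ContDiffAt ℝ ∞ u y) (hx : x ∈ N) :
    pd i (pd j (weight u ξ v)) x = (1/2) * ∑ p, d3 u i j p x * ξ p := by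
  have hev : pd j (weight u ξ v) =ᶠ[𝓝 x]
      fun y => (1/2) * ((∑ p, pd j (pd p u) y * ξ p) + v j) := by
    filter_upwards [hN.mem_nhds hx] with y hy
    exact pd_weight hu hy
  have hdiff : DifferentiableAt ℝ
      (fun y => (∑ p, pd j (pd p u) y * ξ p) + v j) x := by
    refine DifferentiableAt.add ?_ (differentiableAt_const _)
    exact DifferentiableAt.fun_sum fun p _ =>
      (cdiffAt_diffAt (contDiffAt_pd (contDiffAt_pd (hu x hx)))).mul_const _
  rw [pd_congr_nhds hev, pd_const_mul _ hdiff,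
      pd_add (DifferentiableAt.fun_sum fun p _ =>
          (cdiffAt_diffAt (contDiffAt_pd (contDiffAt_pd (hu x hx)))).mul_const _)
        (differentiableAt_const _),
      pd_sum Finset.univ (fun p y => pd j (pd p u) y * ξ p)
        (fun p _ => (cdiffAt_diffAt (contDiffAt_pd (contDiffAt_pd (hu x hx)))).mul_const _),
      pd_const]
  rw [Finset.sum_congr rfl fun p (_ : p ∈ Finset.univ) => by
      rw [pd_mul_const _ (cdiffAt_diffAt (contDiffAt_pd (contDiffAt_pd (hu x hx))))]]
  simp only [add_zero]
  rfl

lemma MA_deriv (hN : IsOpen N) (hu : ∀ y ∈ N, ContDiffAt ℝ ∞ u y)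
    (hdet : ∀ y ∈ N, (hessian u y).det ≠ 0) (hMA : MAeq u N v ξ c) (hx : x ∈ N) :
    ∑ a, ∑ r, ginv u x a r * d3 u k r a x
      = -(v k) + ∑ q, hessian u x k q * ξ q := by
  have hev : (fun y => Real.log ((hessian u y).det)) =ᶠ[𝓝 x]
      (fun y => -(∑ p, v p * y p) + (∑ q, pd q u y * ξ q) + c) := by
    filter_upwards [hN.mem_nhds hx] with y hy
    exact hMA y hy
  have hDdiff : DifferentiableAt ℝ (fun y => (hessian u y).det) x :=
    diffAt_det fun a b => diffAt_hess hu hx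
  have hlog : pd k (fun y => Real.log ((hessian u y).det)) x
      = ((hessian u x).det)⁻¹ * pd k (fun y => (hessian u y).det) x := by
    have h := (HasFDerivAt.log hDdiff.hasFDerivAt (hdet x hx)).fderiv
    show fderiv ℝ (fun y => Real.log ((hessian u y).det)) x (Pi.single k 1) = _
    rw [h, ContinuousLinearMap.smul_apply, smul_eq_mul]
    rfl
  have hdetpd : pd k (fun y => (hessian u y).det) x
      = ∑ a, ∑ r, (hessian u x).adjugate a r * d3 u k r a x :=
    pd_det_adj fun a b => diffAt_hess hu hx
  have hLHS : pd k (fun y => Real.log ((hessian u y).det)) x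
      = ∑ a, ∑ r, ginv u x a r * d3 u k r a x := by
    rw [hlog, hdetpd, Finset.mul_sum]
    refine Finset.sum_congr rfl fun a _ => ?_
    rw [Finset.mul_sum]
    refine Finset.sum_congr rfl fun r _ => ?_
    rw [ginv_entry, mul_assoc]
  have hRHS : pd k (fun y => -(∑ p, v p * y p) + (∑ q, pd q u y * ξ q) + c) x
      = -(v k) + ∑ q, hessian u x k q * ξ q := by
    have d1 : DifferentiableAt ℝ (fun y : Fin n → ℝ => ∑ p, v p * y p) x :=
      DifferentiableAt.fun_sum fun q _ => (diffAt_coord q).const_mul _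
    have d2 : DifferentiableAt ℝ (fun y => ∑ q, pd q u y * ξ q) x :=
      DifferentiableAt.fun_sum fun p _ =>
        (cdiffAt_diffAt (contDiffAt_pd (hu x hx))).mul_const _
    rw [pd_add ((d1.fun_neg).fun_add d2) (differentiableAt_const _), pd_const, add_zero,
        pd_add d1.fun_neg d2, pd_neg,
        pd_sum Finset.univ (fun q y => v q * y q)
          (fun q _ => (diffAt_coord q).const_mul _),
        pd_sum Finset.univ (fun p y => pd p u y * ξ p)
          (fun p _ => (cdiffAt_diffAt (contDiffAt_pd (hu x hx))).mul_const _)]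
    rw [Finset.sum_congr rfl fun q (_ : q ∈ Finset.univ) => by
          rw [pd_const_mul (v q) (diffAt_coord q), pd_coord],
        Finset.sum_congr rfl fun p (_ : p ∈ Finset.univ) =>
          pd_mul_const (ξ p) (cdiffAt_diffAt (contDiffAt_pd (hu x hx)))]
    simp [hess_apply]
  rw [← hLHS, pd_congr_nhds hev, hRHS]
end Gamma

section Algebra
variable {n : ℕ}

private lemma sum_comm3 {M : Type*} [AddCommMonoid M] (f : Fin n → Fin n → Fin n → M) :
    ∑ a, ∑ b, ∑ c, f a b c = ∑ c, ∑ a, ∑ b, f a b c := by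
  calc ∑ a, ∑ b, ∑ c, f a b c
      = ∑ a, ∑ c, ∑ b, f a b c := Finset.sum_congr rfl fun a _ => Finset.sum_comm
    _ = ∑ c, ∑ a, ∑ b, f a b c := Finset.sum_comm

lemma key_algebra (G H : Fin n → Fin n → ℝ) (T : Fin n → Fin n → Fin n → ℝ)
    (Q : Fin n → Fin n → Fin n → Fin n → ℝ) (v ξ : Fin n → ℝ) (i j : Fin n)
    (hHsym : ∀ a b, H a b = H b a)
    (hT12 : ∀ a b c, T a b c = T b a c)
    (hT23 : ∀ a b c, T a b c = T a c b)
    (hQ : ∀ a b c d, Q a b c d = Q c b a d)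
    (hHG : ∀ a b, ∑ l, H a l * G l b = if a = b then 1 else 0)
    (hMA : ∀ k, ∑ a, ∑ r, H a r * T k r a = -(v k) + ∑ q, G k q * ξ q) :
    ((∑ k, (1/2) * ∑ l, (H k l * Q k i j l
          + T i j l * (-∑ a, ∑ b, H k a * T k a b * H b l)))
      - (∑ k, (1/2) * ∑ l, (H k l * Q j i k l
          + T i k l * (-∑ a, ∑ b, H k a * T j a b * H b l)))
      + (∑ k, ∑ p, ((1/2) * ∑ l, H k l * T k p l) * ((1/2) * ∑ l, H p l * T i j l))
      - (∑ k, ∑ p, ((1/2) * ∑ l, H k l * T j p l) * ((1/2) * ∑ l, H p l * T i k l)))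
    + ((1/2) * ∑ p, T i j p * ξ p
      - ∑ k, ((1/2) * ∑ l, H k l * T i j l) * ((1/2) * ((∑ p, G k p * ξ p) + v k)))
    = (1/4) * ∑ k, ∑ a, ∑ l, ∑ b, H k a * H l b * T i k l * T j a b := by
  obtain ⟨E, hE⟩ : ∃ E : Fin n → ℝ, ∀ k, E k = -(v k) + ∑ q, G k q * ξ q :=
    ⟨_, fun _ => rfl⟩
  -- contraction identities
  have c1 : ∀ d, ∑ k, ∑ a, H k a * T k a d = E d := by
    intro d
    rw [hE d, ← hMA d]
    refine Finset.sum_congr rfl fun k _ => Finset.sum_congr rfl fun a _ => ?_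
    rw [(hT12 k a d).trans ((hT23 a k d).trans (hT12 a d k))]
  have c2 : ∀ p, ∑ k, ∑ l, H k l * T k p l = E p := by
    intro p
    rw [← c1 p]
    exact Finset.sum_congr rfl fun k _ => Finset.sum_congr rfl fun l _ => by rw [hT23 k p l]
  have c3 : ∀ l, ∑ k, H k l * (∑ p, G k p * ξ p) = ξ l := by
    intro l
    calc ∑ k, H k l * ∑ p, G k p * ξ p
        = ∑ k, ∑ p, H k l * G k p * ξ p := by
          refine Finset.sum_congr rfl fun k _ => ?_
          rw [Finset.mul_sum]
          exact Finset.sum_congr rfl fun p _ => by ring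
      _ = ∑ p, ∑ k, H k l * G k p * ξ p := Finset.sum_comm
      _ = ∑ p, (∑ k, H l k * G k p) * ξ p := by
          refine Finset.sum_congr rfl fun p _ => ?_
          rw [Finset.sum_mul]
          exact Finset.sum_congr rfl fun k _ => by rw [hHsym k l]
      _ = ∑ p, (if l = p then 1 else 0) * ξ p := by
          exact Finset.sum_congr rfl fun p _ => by rw [hHG l p]
      _ = ξ l := by simp
  -- inner contraction for S1
  have inner1 : ∀ l, ∑ k, ∑ a, ∑ b, H k a * T k a b * H b l = ∑ b, E b * H b l := by
    intro l
    calc ∑ k, ∑ a, ∑ b, H k a * T k a b * H b l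
        = ∑ b, ∑ k, ∑ a, H k a * T k a b * H b l := sum_comm3 _
      _ = ∑ b, (∑ k, ∑ a, H k a * T k a b) * H b l := by
          refine Finset.sum_congr rfl fun b _ => ?_
          rw [Finset.sum_mul]
          exact Finset.sum_congr rfl fun k _ => (Finset.sum_mul _ _ _).symm
      _ = ∑ b, E b * H b l := by
          exact Finset.sum_congr rfl fun b _ => by rw [c1 b]
  -- block evaluations
  have hS1 : ∑ k, ∑ l, T i j l * (∑ a, ∑ b, H k a * T k a b * H b l)
      = ∑ l, T i j l * (∑ b, E b * H b l) := by
    calc ∑ k, ∑ l, T i j l * (∑ a, ∑ b, H k a * T k a b * H b l)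
        = ∑ l, ∑ k, T i j l * (∑ a, ∑ b, H k a * T k a b * H b l) := Finset.sum_comm
      _ = ∑ l, T i j l * ∑ k, ∑ a, ∑ b, H k a * T k a b * H b l := by
          exact Finset.sum_congr rfl fun l _ => (Finset.mul_sum _ _ _).symm
      _ = ∑ l, T i j l * (∑ b, E b * H b l) := by
          exact Finset.sum_congr rfl fun l _ => by rw [inner1 l]
  have hP3 : ∑ k, ∑ p, ((1/2) * ∑ l, H k l * T k p l) * ((1/2) * ∑ l, H p l * T i j l)
      = ∑ p, (1/2 * E p) * ((1/2) * ∑ l, H p l * T i j l) := by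
    calc ∑ k, ∑ p, ((1/2) * ∑ l, H k l * T k p l) * ((1/2) * ∑ l, H p l * T i j l)
        = ∑ p, ∑ k, ((1/2) * ∑ l, H k l * T k p l) * ((1/2) * ∑ l, H p l * T i j l) :=
          Finset.sum_comm
      _ = ∑ p, (∑ k, (1/2) * ∑ l, H k l * T k p l) * ((1/2) * ∑ l, H p l * T i j l) := by
          exact Finset.sum_congr rfl fun p _ => (Finset.sum_mul _ _ _).symm
      _ = ∑ p, (1/2 * E p) * ((1/2) * ∑ l, H p l * T i j l) := by
          refine Finset.sum_congr rfl fun p _ => ?_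
          rw [← Finset.mul_sum, c2 p]
  have hEH : ∀ l, ∑ b, E b * H b l = ξ l - ∑ b, H b l * v b := by
    intro l
    have h1 : ∑ b, E b * H b l
        = ∑ b, (H b l * (∑ q, G b q * ξ q) - H b l * v b) := by
      refine Finset.sum_congr rfl fun b _ => ?_
      rw [hE b]; ring
    rw [h1, Finset.sum_sub_distrib, c3 l]
  -- block P1
  have hP1 : (∑ k, (1/2) * ∑ l, (H k l * Q k i j l
        + T i j l * (-∑ a, ∑ b, H k a * T k a b * H b l)))
      = (1/2) * (∑ k, ∑ l, H k l * Q k i j l)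
        - (1/2) * ∑ l, T i j l * (ξ l - ∑ b, H b l * v b) := by
    calc ∑ k, (1/2) * ∑ l, (H k l * Q k i j l
            + T i j l * (-∑ a, ∑ b, H k a * T k a b * H b l))
        = (1/2) * ∑ k, ∑ l, (H k l * Q k i j l
            + T i j l * (-∑ a, ∑ b, H k a * T k a b * H b l)) := by
          rw [Finset.mul_sum]
      _ = (1/2) * ((∑ k, ∑ l, H k l * Q k i j l)
            + ∑ k, ∑ l, T i j l * (-∑ a, ∑ b, H k a * T k a b * H b l)) := by
          rw [← Finset.sum_add_distrib]
          congr 1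
          exact Finset.sum_congr rfl fun k _ => Finset.sum_add_distrib
      _ = (1/2) * ((∑ k, ∑ l, H k l * Q k i j l)
            - ∑ k, ∑ l, T i j l * (∑ a, ∑ b, H k a * T k a b * H b l)) := by
          simp only [mul_neg, Finset.sum_neg_distrib]
          ring
      _ = (1/2) * ((∑ k, ∑ l, H k l * Q k i j l)
            - ∑ l, T i j l * (ξ l - ∑ b, H b l * v b)) := by
          rw [hS1]
          have he2 : (∑ l, T i j l * (∑ b, E b * H b l))
              = ∑ l, T i j l * (ξ l - ∑ b, H b l * v b) :=
            Finset.sum_congr rfl fun l _ => by rw [hEH l]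
          rw [he2]
      _ = _ := by ring
  -- block P2
  have hS2 : ∑ k, ∑ l, T i k l * (∑ a, ∑ b, H k a * T j a b * H b l)
      = ∑ k, ∑ a, ∑ l, ∑ b, H k a * H l b * T i k l * T j a b := by
    refine Finset.sum_congr rfl fun k _ => ?_
    calc ∑ l, T i k l * (∑ a, ∑ b, H k a * T j a b * H b l)
        = ∑ l, ∑ a, ∑ b, T i k l * (H k a * T j a b * H b l) := by
          refine Finset.sum_congr rfl fun l _ => ?_
          rw [Finset.mul_sum]
          exact Finset.sum_congr rfl fun a _ => Finset.mul_sum _ _ _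
      _ = ∑ a, ∑ l, ∑ b, T i k l * (H k a * T j a b * H b l) := Finset.sum_comm
      _ = ∑ a, ∑ l, ∑ b, H k a * H l b * T i k l * T j a b := by
          refine Finset.sum_congr rfl fun a _ => Finset.sum_congr rfl fun l _ =>
            Finset.sum_congr rfl fun b _ => ?_
          rw [hHsym b l]; ring
  have hP2 : (∑ k, (1/2) * ∑ l, (H k l * Q j i k l
        + T i k l * (-∑ a, ∑ b, H k a * T j a b * H b l)))
      = (1/2) * (∑ k, ∑ l, H k l * Q j i k l)
        - (1/2) * ∑ k, ∑ a, ∑ l, ∑ b, H k a * H l b * T i k l * T j a b := by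
    calc ∑ k, (1/2) * ∑ l, (H k l * Q j i k l
            + T i k l * (-∑ a, ∑ b, H k a * T j a b * H b l))
        = (1/2) * ∑ k, ∑ l, (H k l * Q j i k l
            + T i k l * (-∑ a, ∑ b, H k a * T j a b * H b l)) := by
          rw [Finset.mul_sum]
      _ = (1/2) * ((∑ k, ∑ l, H k l * Q j i k l)
            + ∑ k, ∑ l, T i k l * (-∑ a, ∑ b, H k a * T j a b * H b l)) := by
          rw [← Finset.sum_add_distrib]
          congr 1
          exact Finset.sum_congr rfl fun k _ => Finset.sum_add_distrib
      _ = (1/2) * ((∑ k, ∑ l, H k l * Q j i k l)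
            - ∑ k, ∑ l, T i k l * (∑ a, ∑ b, H k a * T j a b * H b l)) := by
          simp only [mul_neg, Finset.sum_neg_distrib]
          ring
      _ = _ := by rw [hS2]; ring
  -- Q-terms agree
  have hQQ : ∑ k, ∑ l, H k l * Q k i j l = ∑ k, ∑ l, H k l * Q j i k l :=
    Finset.sum_congr rfl fun k _ => Finset.sum_congr rfl fun l _ => by rw [hQ k i j l]
  -- block P3 (continued)
  have hP3b : ∑ k, ∑ p, ((1/2) * ∑ l, H k l * T k p l) * ((1/2) * ∑ l, H p l * T i j l)
      = (1/4) * ∑ l, (ξ l - ∑ b, H b l * v b) * T i j l := by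
    rw [hP3]
    calc ∑ p, (1/2 * E p) * ((1/2) * ∑ l, H p l * T i j l)
        = ∑ p, ∑ l, (1/4) * (E p * (H p l * T i j l)) := by
          refine Finset.sum_congr rfl fun p _ => ?_
          rw [Finset.mul_sum, Finset.mul_sum]
          exact Finset.sum_congr rfl fun l _ => by ring
      _ = ∑ l, ∑ p, (1/4) * (E p * (H p l * T i j l)) := Finset.sum_comm
      _ = ∑ l, (1/4) * ((∑ p, E p * H p l) * T i j l) := by
          refine Finset.sum_congr rfl fun l _ => ?_
          rw [Finset.sum_mul, Finset.mul_sum]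
          exact Finset.sum_congr rfl fun p _ => by ring
      _ = (1/4) * ∑ l, (ξ l - ∑ b, H b l * v b) * T i j l := by
          rw [Finset.mul_sum]
          exact Finset.sum_congr rfl fun l _ => by rw [hEH l]
  -- block P4
  have hP4 : ∑ k, ∑ p, ((1/2) * ∑ l, H k l * T j p l) * ((1/2) * ∑ l, H p l * T i k l)
      = (1/4) * ∑ k, ∑ a, ∑ l, ∑ b, H k a * H l b * T i k l * T j a b := by
    rw [Finset.mul_sum]
    refine Finset.sum_congr rfl fun k _ => ?_
    calc ∑ p, ((1/2) * ∑ l, H k l * T j p l) * ((1/2) * ∑ m, H p m * T i k m)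
        = ∑ p, ∑ l, ∑ m, (1/4) * (H k l * T j p l * (H p m * T i k m)) := by
          refine Finset.sum_congr rfl fun p _ => ?_
          rw [show ((1/2) * ∑ l, H k l * T j p l) * ((1/2) * ∑ m, H p m * T i k m)
              = (1/4) * ((∑ l, H k l * T j p l) * (∑ m, H p m * T i k m)) from by ring,
            Finset.sum_mul_sum, Finset.mul_sum]
          exact Finset.sum_congr rfl fun l _ => by
            rw [Finset.mul_sum]
      _ = ∑ p, ∑ l, ∑ m, (1/4) * (H k l * H m p * T i k m * T j l p) := by
          refine Finset.sum_congr rfl fun p _ => Finset.sum_congr rfl fun l _ =>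
            Finset.sum_congr rfl fun m _ => ?_
          rw [hHsym p m, hT23 j p l]
          ring
      _ = ∑ l, ∑ m, ∑ p, (1/4) * (H k l * H m p * T i k m * T j l p) :=
          (sum_comm3 _).symm
      _ = ∑ a, ∑ l, ∑ b, (1/4) * (H k a * H l b * T i k l * T j a b) := rfl
      _ = (1/4) * ∑ a, ∑ l, ∑ b, H k a * H l b * T i k l * T j a b := by
          rw [Finset.mul_sum]
          exact Finset.sum_congr rfl fun a _ => by
            rw [Finset.mul_sum]
            exact Finset.sum_congr rfl fun l _ => (Finset.mul_sum _ _ _).symm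
  -- block P6
  have hP6 : ∑ k, ((1/2) * ∑ l, H k l * T i j l) * ((1/2) * ((∑ p, G k p * ξ p) + v k))
      = (1/4) * ∑ l, T i j l * (ξ l + ∑ b, H b l * v b) := by
    calc ∑ k, ((1/2) * ∑ l, H k l * T i j l) * ((1/2) * ((∑ p, G k p * ξ p) + v k))
        = ∑ k, ∑ l, (1/4) * (T i j l * (H k l * ((∑ p, G k p * ξ p) + v k))) := by
          refine Finset.sum_congr rfl fun k _ => ?_
          rw [Finset.mul_sum, Finset.sum_mul]
          exact Finset.sum_congr rfl fun l _ => by ring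
      _ = ∑ l, ∑ k, (1/4) * (T i j l * (H k l * ((∑ p, G k p * ξ p) + v k))) :=
          Finset.sum_comm
      _ = ∑ l, (1/4) * (T i j l * ∑ k, H k l * ((∑ p, G k p * ξ p) + v k)) := by
          refine Finset.sum_congr rfl fun l _ => ?_
          rw [Finset.mul_sum, Finset.mul_sum]
      _ = ∑ l, (1/4) * (T i j l * (ξ l + ∑ b, H b l * v b)) := by
          refine Finset.sum_congr rfl fun l _ => ?_
          congr 2
          calc ∑ k, H k l * ((∑ p, G k p * ξ p) + v k)
              = ∑ k, (H k l * (∑ p, G k p * ξ p) + H k l * v k) :=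
                Finset.sum_congr rfl fun k _ => by ring
            _ = (∑ k, H k l * (∑ p, G k p * ξ p)) + ∑ k, H k l * v k :=
                Finset.sum_add_distrib
            _ = ξ l + ∑ b, H b l * v b := by rw [c3 l]
      _ = (1/4) * ∑ l, T i j l * (ξ l + ∑ b, H b l * v b) := (Finset.mul_sum _ _ _).symm
  -- final balance of first-order terms
  have hbal : (1/2) * (∑ l, T i j l * (ξ l - ∑ b, H b l * v b))
        + (1/4) * (∑ l, T i j l * (ξ l + ∑ b, H b l * v b))
      = (1/4) * (∑ l, (ξ l - ∑ b, H b l * v b) * T i j l)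
        + (1/2) * (∑ p, T i j p * ξ p) := by
    rw [Finset.mul_sum, Finset.mul_sum, Finset.mul_sum, Finset.mul_sum,
        ← Finset.sum_add_distrib, ← Finset.sum_add_distrib]
    exact Finset.sum_congr rfl fun l _ => by ring
  rw [hP1, hP2, hP3b, hP4, hP6]
  linear_combination (1/2) * hQQ - hbal

end Algebra

section PSD
open scoped Matrix MatrixOrder
variable {n : ℕ}

lemma psd_quad (H A : Matrix (Fin n) (Fin n) ℝ) (hH : H.PosSemidef)
    (hHsym : Hᵀ = H) (hA : Aᵀ = A) :
    0 ≤ ∑ k, ∑ a, ∑ l, ∑ b, H k a * H l b * A k l * A a b := by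
  have hSS : CFC.sqrt H * CFC.sqrt H = H := CFC.sqrt_mul_sqrt_self H hH.nonneg
  set S := CFC.sqrt H with hSdef
  have hSsym : Sᵀ = S := by
    have h := (Matrix.nonneg_iff_posSemidef.mp (CFC.sqrt_nonneg H)).isHermitian
    rwa [Matrix.IsHermitian, Matrix.conjTranspose_eq_transpose_of_trivial] at h
  have h1 : ∑ k, ∑ a, ∑ l, ∑ b, H k a * H l b * A k l * A a b
      = Matrix.trace (A * H * A * H) := by
    rw [Matrix.trace]
    calc ∑ k, ∑ a, ∑ l, ∑ b, H k a * H l b * A k l * A a b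
        = ∑ k, ∑ l, ∑ x, ∑ y, A k x * H x l * (A l y * H y k) := by
          refine Finset.sum_congr rfl fun k _ => ?_
          calc ∑ a, ∑ l, ∑ b, H k a * H l b * A k l * A a b
              = ∑ b, ∑ a, ∑ l, H k a * H l b * A k l * A a b := sum_comm3 _
            _ = ∑ b, ∑ l, ∑ a, H k a * H l b * A k l * A a b :=
                Finset.sum_congr rfl fun b _ => Finset.sum_comm
            _ = ∑ l, ∑ x, ∑ y, A k x * H x l * (A l y * H y k) := by
                refine Finset.sum_congr rfl fun b _ => Finset.sum_congr rfl fun l _ =>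
                  Finset.sum_congr rfl fun a _ => ?_
                have e1 : A b a = A a b := (congrFun (congrFun hA b) a).symm
                have e2 : H a k = H k a := (congrFun (congrFun hHsym a) k).symm
                rw [e1, e2]
                ring
      _ = ∑ c, ((A * H) * (A * H)) c c := by
          refine Finset.sum_congr rfl fun k _ => ?_
          rw [Matrix.mul_apply]
          refine Finset.sum_congr rfl fun l _ => ?_
          rw [Matrix.mul_apply, Matrix.mul_apply, Finset.sum_mul_sum]
      _ = ∑ c, (A * H * A * H) c c := by
          refine Finset.sum_congr rfl fun c _ => ?_
          congr 1
          rw [Matrix.mul_assoc (A * H) A H]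
  have h2 : Matrix.trace (A * H * A * H) = Matrix.trace ((S * A * S) * (S * A * S)) := by
    rw [← hSS]
    simp only [← Matrix.mul_assoc]
    rw [Matrix.trace_mul_cycle]
    simp only [← Matrix.mul_assoc]
  have hPsym : (S * A * S)ᵀ = S * A * S := by
    rw [Matrix.transpose_mul, Matrix.transpose_mul, hSsym, hA, Matrix.mul_assoc]
  have h3 : Matrix.trace ((S * A * S) * (S * A * S))
      = ∑ c, ∑ d, ((S * A * S) c d)^2 := by
    rw [Matrix.trace]
    refine Finset.sum_congr rfl fun c _ => ?_
    show ((S * A * S) * (S * A * S)) c c = _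
    rw [Matrix.mul_apply]
    refine Finset.sum_congr rfl fun d _ => ?_
    have hdc : (S * A * S) d c = (S * A * S) c d :=
      (congrFun (congrFun hPsym d) c).symm
    rw [hdc, sq]
  rw [h1, h2, h3]
  exact Finset.sum_nonneg fun c _ => Finset.sum_nonneg fun d _ => sq_nonneg _

end PSD

section Final
variable {n : ℕ} {N : Set (Fin n → ℝ)} {u : (Fin n → ℝ) → ℝ} {x : Fin n → ℝ}
  {v ξ : Fin n → ℝ} {c : ℝ}

lemma ricciPhi_eq (hN : IsOpen N) (hu : ∀ y ∈ N, ContDiffAt ℝ ∞ u y)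
    (hdet : ∀ y ∈ N, (hessian u y).det ≠ 0) (hMA : MAeq u N v ξ c) (hx : x ∈ N)
    (i j : Fin n) :
    ricciPhi u (weight u ξ v) i j x
      = (1/4) * ∑ k, ∑ a, ∑ l, ∑ b,
          ginv u x k a * ginv u x l b * d3 u i k l x * d3 u j a b x := by
  have hA1 : (∑ k, pd k (Christoffel u k i j) x)
      = ∑ k, (1/2) * ∑ l, (ginv u x k l * d4 u k i j l x
          + d3 u i j l x * (-∑ a, ∑ b, ginv u x k a * d3 u k a b x * ginv u x b l)) :=
    Finset.sum_congr rfl fun k _ => pd_christoffel hN hu hdet hx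
  have hA2 : (∑ k, pd j (Christoffel u k i k) x)
      = ∑ k, (1/2) * ∑ l, (ginv u x k l * d4 u j i k l x
          + d3 u i k l x * (-∑ a, ∑ b, ginv u x k a * d3 u j a b x * ginv u x b l)) :=
    Finset.sum_congr rfl fun k _ => pd_christoffel hN hu hdet hx
  have hA3 : (∑ k, ∑ p, Christoffel u k k p x * Christoffel u p i j x)
      = ∑ k, ∑ p, ((1/2) * ∑ l, ginv u x k l * d3 u k p l x)
          * ((1/2) * ∑ l, ginv u x p l * d3 u i j l x) :=
    Finset.sum_congr rfl fun k _ => Finset.sum_congr rfl fun p _ => by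
      rw [christoffel_at hN hu hx, christoffel_at hN hu hx]
  have hA4 : (∑ k, ∑ p, Christoffel u k j p x * Christoffel u p i k x)
      = ∑ k, ∑ p, ((1/2) * ∑ l, ginv u x k l * d3 u j p l x)
          * ((1/2) * ∑ l, ginv u x p l * d3 u i k l x) :=
    Finset.sum_congr rfl fun k _ => Finset.sum_congr rfl fun p _ => by
      rw [christoffel_at hN hu hx, christoffel_at hN hu hx]
  have hC1 : pd i (pd j (weight u ξ v)) x = (1/2) * ∑ p, d3 u i j p x * ξ p :=
    pd2_weight hN hu hx
  have hC2 : (∑ k, Christoffel u k i j x * pd k (weight u ξ v) x)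
      = ∑ k, ((1/2) * ∑ l, ginv u x k l * d3 u i j l x)
          * ((1/2) * ((∑ p, hessian u x k p * ξ p) + v k)) :=
    Finset.sum_congr rfl fun k _ => by
      rw [christoffel_at hN hu hx, pd_weight hu hx]
  show ((∑ k, pd k (Christoffel u k i j) x) - (∑ k, pd j (Christoffel u k i k) x)
      + (∑ k, ∑ p, Christoffel u k k p x * Christoffel u p i j x)
      - (∑ k, ∑ p, Christoffel u k j p x * Christoffel u p i k x))
    + (pd i (pd j (weight u ξ v)) x
      - ∑ k, Christoffel u k i j x * pd k (weight u ξ v) x) = _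
  rw [hA1, hA2, hA3, hA4, hC1, hC2]
  exact key_algebra (fun a b => hessian u x a b) (fun a b => ginv u x a b)
    (fun a b c => d3 u a b c x) (fun a b c d => d4 u a b c d x) v ξ i j
    (fun a b => ginv_symm hu hx)
    (fun a b c => d3_swap12 hu hx)
    (fun a b c => d3_swap23 hN hu hx)
    (fun a b c d => d4_13 hN hu hx)
    (fun a b => sum_ginv_hess hdet hx)
    (fun k => MA_deriv hN hu hdet hMA hx)

private lemma rot5 {M : Type*} [AddCommMonoid M]
    (f : Fin n → Fin n → Fin n → Fin n → Fin n → M) :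
    ∑ x, ∑ a, ∑ b, ∑ c, ∑ d, f x a b c d
      = ∑ a, ∑ b, ∑ c, ∑ d, ∑ x, f x a b c d := by
  calc ∑ x, ∑ a, ∑ b, ∑ c, ∑ d, f x a b c d
      = ∑ a, ∑ x, ∑ b, ∑ c, ∑ d, f x a b c d := Finset.sum_comm
    _ = ∑ a, ∑ b, ∑ x, ∑ c, ∑ d, f x a b c d :=
        Finset.sum_congr rfl fun a _ => Finset.sum_comm
    _ = ∑ a, ∑ b, ∑ c, ∑ x, ∑ d, f x a b c d :=
        Finset.sum_congr rfl fun a _ => Finset.sum_congr rfl fun b _ => Finset.sum_comm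
    _ = ∑ a, ∑ b, ∑ c, ∑ d, ∑ x, f x a b c d :=
        Finset.sum_congr rfl fun a _ => Finset.sum_congr rfl fun b _ =>
          Finset.sum_congr rfl fun c _ => Finset.sum_comm

private lemma rot6 {M : Type*} [AddCommMonoid M]
    (f : Fin n → Fin n → Fin n → Fin n → Fin n → Fin n → M) :
    ∑ x, ∑ a, ∑ b, ∑ c, ∑ d, ∑ e, f x a b c d e
      = ∑ a, ∑ b, ∑ c, ∑ d, ∑ e, ∑ x, f x a b c d e := by
  calc ∑ x, ∑ a, ∑ b, ∑ c, ∑ d, ∑ e, f x a b c d e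
      = ∑ a, ∑ x, ∑ b, ∑ c, ∑ d, ∑ e, f x a b c d e := Finset.sum_comm
    _ = ∑ a, ∑ b, ∑ c, ∑ d, ∑ e, ∑ x, f x a b c d e :=
        Finset.sum_congr rfl fun a _ => rot5 fun x b c d e => f x a b c d e

lemma quad_reorg (H : Matrix (Fin n) (Fin n) ℝ) (T : Fin n → Fin n → Fin n → ℝ)
    (w : Fin n → ℝ) :
    ∑ i, ∑ j, ((1/4) * ∑ k, ∑ a, ∑ l, ∑ b, H k a * H l b * T i k l * T j a b)
        * w i * w j
      = (1/4) * ∑ k, ∑ a, ∑ l, ∑ b,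
          H k a * H l b * (∑ i, T i k l * w i) * (∑ j, T j a b * w j) := by
  calc ∑ i, ∑ j, ((1/4) * ∑ k, ∑ a, ∑ l, ∑ b, H k a * H l b * T i k l * T j a b)
          * w i * w j
      = ∑ i, ∑ j, ∑ k, ∑ a, ∑ l, ∑ b,
          (1/4) * (H k a * H l b * T i k l * T j a b * (w i * w j)) := by
        refine Finset.sum_congr rfl fun i _ => Finset.sum_congr rfl fun j _ => ?_
        rw [show ((1/4) * ∑ k, ∑ a, ∑ l, ∑ b, H k a * H l b * T i k l * T j a b)
              * w i * w j
            = ((1/4) * (w i * w j))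
              * ∑ k, ∑ a, ∑ l, ∑ b, H k a * H l b * T i k l * T j a b from by ring]
        simp only [Finset.mul_sum]
        refine Finset.sum_congr rfl fun k _ => Finset.sum_congr rfl fun a _ =>
          Finset.sum_congr rfl fun l _ => Finset.sum_congr rfl fun b _ => by ring
    _ = ∑ j, ∑ k, ∑ a, ∑ l, ∑ b, ∑ i,
          (1/4) * (H k a * H l b * T i k l * T j a b * (w i * w j)) := rot6 _
    _ = ∑ k, ∑ a, ∑ l, ∑ b, ∑ j, ∑ i,
          (1/4) * (H k a * H l b * T i k l * T j a b * (w i * w j)) :=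
        rot5 fun j k a l b => ∑ i,
          (1/4) * (H k a * H l b * T i k l * T j a b * (w i * w j))
    _ = ∑ k, ∑ a, ∑ l, ∑ b, ∑ i, ∑ j,
          (1/4) * (H k a * H l b * T i k l * T j a b * (w i * w j)) :=
        Finset.sum_congr rfl fun k _ => Finset.sum_congr rfl fun a _ =>
          Finset.sum_congr rfl fun l _ => Finset.sum_congr rfl fun b _ =>
            Finset.sum_comm
    _ = (1/4) * ∑ k, ∑ a, ∑ l, ∑ b,
          H k a * H l b * (∑ i, T i k l * w i) * (∑ j, T j a b * w j) := by
        rw [Finset.mul_sum]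
        refine Finset.sum_congr rfl fun k _ => ?_
        rw [Finset.mul_sum]
        refine Finset.sum_congr rfl fun a _ => ?_
        rw [Finset.mul_sum]
        refine Finset.sum_congr rfl fun l _ => ?_
        rw [Finset.mul_sum]
        refine Finset.sum_congr rfl fun b _ => ?_
        rw [show H k a * H l b * (∑ i, T i k l * w i) * (∑ j, T j a b * w j)
            = (H k a * H l b) * ((∑ i, T i k l * w i) * (∑ j, T j a b * w j)) from by ring,
          Finset.sum_mul_sum]
        simp only [Finset.mul_sum]
        refine Finset.sum_congr rfl fun i _ => Finset.sum_congr rfl fun j _ => by ring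

end Final

open scoped Matrix

theorem bakry_emery_nonneg {n : ℕ} (hn : 1 ≤ n) (N : Set (Fin n → ℝ)) (hNopen : IsOpen N)
    (hNne : N.Nonempty) (u : (Fin n → ℝ) → ℝ) (hu : ContDiffOn ℝ (⊤ : ℕ∞) u N)
    (hpos : ∀ x ∈ N, (hessian u x).PosDef)
    (v ξ : Fin n → ℝ) (c : ℝ) (hMA : MAeq u N v ξ c) :
    ∀ x ∈ N, ∀ w : Fin n → ℝ,
      0 ≤ ∑ i, ∑ j, ricciPhi u (weight u ξ v) i j x * w i * w j := by
  intro x hx w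
  have hu' : ∀ y ∈ N, ContDiffAt ℝ ∞ u y := fun y hy =>
    ((hu y hy).contDiffAt (hNopen.mem_nhds hy)).of_le (by simp)
  have hdet : ∀ y ∈ N, (hessian u y).det ≠ 0 := fun y hy => (hpos y hy).det_pos.ne'
  have hrw : ∑ i, ∑ j, ricciPhi u (weight u ξ v) i j x * w i * w j
      = ∑ i, ∑ j, ((1/4) * ∑ k, ∑ a, ∑ l, ∑ b,
          ginv u x k a * ginv u x l b * d3 u i k l x * d3 u j a b x) * w i * w j :=
    Finset.sum_congr rfl fun i _ => Finset.sum_congr rfl fun j _ => by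
      rw [ricciPhi_eq hNopen hu' hdet hMA hx i j]
  rw [hrw, quad_reorg (ginv u x) (fun a b c => d3 u a b c x) w]
  have hH : (ginv u x).PosSemidef := (hpos x hx).inv.posSemidef
  have hHsym : (ginv u x)ᵀ = ginv u x := by
    ext a b
    exact ginv_symm hu' hx
  have hAsym : (Matrix.of fun k l => ∑ i, d3 u i k l x * w i)ᵀ
      = Matrix.of fun k l => ∑ i, d3 u i k l x * w i := by
    ext a b
    show ∑ i, d3 u i b a x * w i = ∑ i, d3 u i a b x * w i
    exact Finset.sum_congr rfl fun i _ => by rw [d3_swap23 hNopen hu' hx]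
  have hpsd := psd_quad (ginv u x) (Matrix.of fun k l => ∑ i, d3 u i k l x * w i)
    hH hHsym hAsym
  exact mul_nonneg (by norm_num) hpsd

end KRS
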